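/- Let C = {C_1, …, C_k} be a k-clustering of (X, s) with k ≥ 3, such that for every pair of distinct clusters C_i, C_j there is a constant λ_{ij} with s(u,v) = λ_{ij} for all u ∈ C_i, v ∈ C_j. Suppose λ_{12} = a > b = λ_{13} and |C_3| ≥ 2. Fix x ∈ C_1, and for W > 0 let w_W be the weight function with w_W(x) = W and w_W(z) = 1 for z ≠ x. Let D_1, D_2 be any partition of C_3 into two nonempty parts, and let C' be the k-clustering {C_1 ∪ C_2, D_1, D_2, C_4, …, C_k}. Then there exists W_0 > 0 such that for all W ≥ W_0, rcut(C', w_W[X], s) < rcut(C, w_W[X], s). -/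

import Mathlib

open Finset

/-- A weight function assigns a positive real weight to every point. -/
def IsWeight {X : Type*} (w : X → ℝ) : Prop := ∀ x, 0 < w x

/-- An indexed k-clustering: `k` pairwise disjoint nonempty parts covering `X`. -/
def IsClusteringI {X : Type*} {k : ℕ} (Cl : Fin k → Finset X) : Prop :=
  (∀ i, (Cl i).Nonempty) ∧ (∀ i j, i ≠ j → Disjoint (Cl i) (Cl j)) ∧
  (∀ x : X, ∃ i, x ∈ Cl i)

/-- The ratio-cut cost of an indexed clustering of weighted data `(w[X], s)`. -/
noncomputable def rcutI {X : Type*} [Fintype X] [DecidableEq X] {k : ℕ}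
    (Cl : Fin k → Finset X) (w : X → ℝ) (s : X → X → ℝ) : ℝ :=
  (1 / 2) * ∑ i, (∑ x ∈ Cl i, ∑ y ∈ (Cl i)ᶜ, s x y * w x * w y) / (∑ x ∈ Cl i, w x)

/-!
Put the weight `W` on `x` and weight `1` everywhere else. A cluster `S` avoiding `x` then pays
`W · (∑ u ∈ S, s u x) / |S| + O(1)`, that is `μ W + O(1)` when `s (·, x) = μ` on `S`, whereas the
cluster containing `x` pays a term `(A W + B) / (W + c)` that converges. Before the move, `Cl j`
and `Cl l` pay `a W` and `b W`; afterwards `Cl j` has joined the cluster of `x` and the two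
halves of `Cl l` pay `b W` each. So the cost changes by `(b - a) W / 2 + O(1) → -∞`.
-/

open Filter Topology

lemma tendsto_affine_div_affine (α β c : ℝ) :
    Tendsto (fun W : ℝ => (W * α + β) / (W + c)) atTop (𝓝 α) := by
  have hrest : Tendsto (fun W : ℝ => α + (β - α * c) / (W + c)) atTop (𝓝 (α + 0)) :=
    tendsto_const_nhds.add <|
      tendsto_const_nhds.div_atTop (tendsto_atTop_add_const_right _ _ tendsto_id)
  rw [add_zero] at hrest
  refine hrest.congr' ?_
  filter_upwards [eventually_gt_atTop (-c)] with W hW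
  have hne : W + c ≠ 0 := by linarith
  field_simp
  ring

lemma exists_pos_forall_ge_lt_of_tendsto_sub_atBot {f g : ℝ → ℝ}
    (h : Tendsto (fun W => f W - g W) atTop atBot) : ∃ W₀ > (0 : ℝ), ∀ W ≥ W₀, f W < g W := by
  obtain ⟨W₀, hW₀⟩ :=
    ((h.eventually (eventually_lt_atBot 0)).and (eventually_gt_atTop 0)).exists_forall_of_atTop
  exact ⟨W₀, (hW₀ W₀ le_rfl).2, fun W hW => sub_neg.mp (hW₀ W hW).1⟩

section SpikeWeight

variable {X : Type*} [DecidableEq X]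

/-- The weight `w_W` of the statement. -/
def spikeWeight (x : X) (W : ℝ) : X → ℝ := fun z => if z = x then W else 1

@[simp]
lemma spikeWeight_self (x : X) (W : ℝ) : spikeWeight x W x = W := if_pos rfl

lemma spikeWeight_of_ne {x z : X} (h : z ≠ x) (W : ℝ) : spikeWeight x W z = 1 := if_neg h

lemma sum_spikeWeight_of_mem {S : Finset X} {x : X} (hx : x ∈ S) (W : ℝ) :
    ∑ z ∈ S, spikeWeight x W z = W + (#S - 1 : ℝ) := by
  rw [← add_sum_erase _ _ hx, spikeWeight_self,
    sum_congr rfl fun z hz => spikeWeight_of_ne (ne_of_mem_erase hz) W]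
  simp [card_erase_of_mem hx, Nat.cast_sub (one_le_card.mpr ⟨x, hx⟩)]

lemma sum_spikeWeight_of_notMem {S : Finset X} {x : X} (hx : x ∉ S) (W : ℝ) :
    ∑ z ∈ S, spikeWeight x W z = #S := by
  rw [sum_congr rfl fun z hz => spikeWeight_of_ne (ne_of_mem_of_not_mem hz hx) W]
  simp

end SpikeWeight

section RatioCut

variable {X : Type*} [Fintype X] [DecidableEq X]

noncomputable def weightedCut (S : Finset X) (w : X → ℝ) (s : X → X → ℝ) : ℝ :=
  ∑ u ∈ S, ∑ v ∈ Sᶜ, s u v * w u * w v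

noncomputable def ratioCutTerm (S : Finset X) (w : X → ℝ) (s : X → X → ℝ) : ℝ :=
  weightedCut S w s / ∑ u ∈ S, w u

lemma rcutI_sub_rcutI {k : ℕ} (Cl Cl' : Fin k → Finset X) (T : Finset (Fin k))
    (hT : ∀ t ∉ T, Cl' t = Cl t) (w : X → ℝ) (s : X → X → ℝ) :
    rcutI Cl' w s - rcutI Cl w s
      = 1 / 2 * ∑ t ∈ T, (ratioCutTerm (Cl' t) w s - ratioCutTerm (Cl t) w s) := by
  change 1 / 2 * ∑ t, ratioCutTerm (Cl' t) w s - 1 / 2 * ∑ t, ratioCutTerm (Cl t) w s = _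
  rw [← mul_sub, ← sum_sub_distrib]
  congr 1
  exact (sum_subset (subset_univ T) fun t _ ht => by rw [hT t ht, sub_self]).symm

lemma weightedCut_spikeWeight_of_mem (s : X → X → ℝ) {S : Finset X} {x : X} (hx : x ∈ S)
    (W : ℝ) :
    weightedCut S (spikeWeight x W) s
      = W * ∑ v ∈ Sᶜ, s x v + ∑ u ∈ S.erase x, ∑ v ∈ Sᶜ, s u v := by
  have hv : ∀ v ∈ Sᶜ, spikeWeight x W v = 1 := fun v hv =>
    spikeWeight_of_ne (ne_of_mem_of_not_mem hx (mem_compl.mp hv)).symm W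
  rw [weightedCut, ← add_sum_erase _ _ hx, mul_sum]
  congr 1
  · exact sum_congr rfl fun v hv' => by rw [hv v hv', spikeWeight_self]; ring
  · refine sum_congr rfl fun u hu => sum_congr rfl fun v hv' => ?_
    rw [hv v hv', spikeWeight_of_ne (ne_of_mem_erase hu)]
    ring

lemma weightedCut_spikeWeight_of_notMem (s : X → X → ℝ) {S : Finset X} {x : X} (hx : x ∉ S)
    (W : ℝ) :
    weightedCut S (spikeWeight x W) s
      = W * ∑ u ∈ S, s u x + ∑ u ∈ S, ∑ v ∈ Sᶜ.erase x, s u v := by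
  rw [weightedCut, mul_sum, ← sum_add_distrib]
  refine sum_congr rfl fun u hu => ?_
  rw [← add_sum_erase _ _ (mem_compl.mpr hx), spikeWeight_of_ne (ne_of_mem_of_not_mem hu hx),
    spikeWeight_self]
  congr 1
  · ring
  · exact sum_congr rfl fun v hv => by rw [spikeWeight_of_ne (ne_of_mem_erase hv)]; ring

lemma tendsto_ratioCutTerm_spikeWeight_of_mem (s : X → X → ℝ) {S : Finset X} {x : X}
    (hx : x ∈ S) :
    Tendsto (fun W => ratioCutTerm S (spikeWeight x W) s) atTop (𝓝 (∑ v ∈ Sᶜ, s x v)) := by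
  simp only [ratioCutTerm, weightedCut_spikeWeight_of_mem s hx, sum_spikeWeight_of_mem hx]
  exact tendsto_affine_div_affine _ _ _

lemma exists_ratioCutTerm_spikeWeight_eq_of_notMem (s : X → X → ℝ) {S : Finset X} {x : X}
    (hx : x ∉ S) (hS : S.Nonempty) {μ : ℝ} (hμ : ∀ u ∈ S, s u x = μ) :
    ∃ c, ∀ W, ratioCutTerm S (spikeWeight x W) s = μ * W + c := by
  refine ⟨(∑ u ∈ S, ∑ v ∈ Sᶜ.erase x, s u v) / #S, fun W => ?_⟩
  have hcard : (#S : ℝ) ≠ 0 := by exact_mod_cast hS.card_pos.ne'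
  rw [ratioCutTerm, weightedCut_spikeWeight_of_notMem s hx, sum_spikeWeight_of_notMem hx,
    sum_congr rfl hμ, sum_const, nsmul_eq_mul]
  field_simp

end RatioCut

theorem rcut_merge_split_improves_general
    {X : Type*} [Fintype X] [DecidableEq X]
    (s : X → X → ℝ) (hsym : ∀ x y, s x y = s y x)
    (k : ℕ)
    (Cl : Fin k → Finset X) (hCl : IsClusteringI Cl)
    (i j l : Fin k) (hij : i ≠ j) (hil : i ≠ l) (hjl : j ≠ l)
    (lam : Fin k → Fin k → ℝ)
    (hlam : ∀ p q : Fin k, p ≠ q → ∀ u ∈ Cl p, ∀ v ∈ Cl q, s u v = lam p q)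
    (a b : ℝ) (ha : lam i j = a) (hb : lam i l = b) (hab : b < a)
    (x : X) (hx : x ∈ Cl i)
    (D₁ D₂ : Finset X) (hD₁ : D₁.Nonempty) (hD₂ : D₂.Nonempty)
    (hDun : D₁ ∪ D₂ = Cl l) :
    ∃ W₀ > (0 : ℝ), ∀ W ≥ W₀,
      rcutI (fun t => if t = i then Cl i ∪ Cl j else if t = j then D₁
                      else if t = l then D₂ else Cl t)
        (fun z => if z = x then W else 1) s
      < rcutI Cl (fun z => if z = x then W else 1) s := by
  set Cl' : Fin k → Finset X := fun t => if t = i then Cl i ∪ Cl j else if t = j then D₁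
    else if t = l then D₂ else Cl t
  obtain ⟨hne, hdisj, -⟩ := hCl
  have hxl : x ∉ Cl l := disjoint_left.mp (hdisj i l hil) hx
  have hsim : ∀ p, p ≠ i → ∀ u ∈ Cl p, s u x = lam i p := fun p hp u hu => by
    rw [hsym, hlam i p hp.symm x hx u hu]
  have hsl : ∀ u ∈ Cl l, s u x = b := fun u hu => hb ▸ hsim l hil.symm u hu
  obtain ⟨cj, hcj⟩ := exists_ratioCutTerm_spikeWeight_eq_of_notMem s
    (disjoint_left.mp (hdisj i j hij) hx) (hne j) fun u hu => ha ▸ hsim j hij.symm u hu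
  obtain ⟨cl, hcl⟩ := exists_ratioCutTerm_spikeWeight_eq_of_notMem s hxl (hne l) hsl
  have hD₁l : D₁ ⊆ Cl l := hDun ▸ subset_union_left
  have hD₂l : D₂ ⊆ Cl l := hDun ▸ subset_union_right
  obtain ⟨c₁, hc₁⟩ := exists_ratioCutTerm_spikeWeight_eq_of_notMem s
    (fun h => hxl (hD₁l h)) hD₁ fun u hu => hsl u (hD₁l hu)
  obtain ⟨c₂, hc₂⟩ := exists_ratioCutTerm_spikeWeight_eq_of_notMem s
    (fun h => hxl (hD₂l h)) hD₂ fun u hu => hsl u (hD₂l hu)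
  let remainder W := ratioCutTerm (Cl i ∪ Cl j) (spikeWeight x W) s
    - ratioCutTerm (Cl i) (spikeWeight x W) s + (c₁ + c₂ - cj - cl)
  have hremainder : Tendsto remainder atTop (𝓝 _) :=
    ((tendsto_ratioCutTerm_spikeWeight_of_mem s (mem_union_left _ hx)).sub
      (tendsto_ratioCutTerm_spikeWeight_of_mem s hx)).add_const _
  have hdiff : ∀ W, rcutI Cl' (spikeWeight x W) s - rcutI Cl (spikeWeight x W) s
      = (b - a) / 2 * W + 1 / 2 * remainder W := fun W => by
    rw [rcutI_sub_rcutI _ _ {i, j, l} (fun t ht => by simp_all [Cl']),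
      sum_insert (by simp [hij, hil]), sum_insert (by simp [hjl]), sum_singleton]
    simp only [Cl', if_pos, if_neg hij.symm, if_neg hil.symm, if_neg hjl.symm]
    rw [hcj, hcl, hc₁, hc₂]
    ring
  refine exists_pos_forall_ge_lt_of_tendsto_sub_atBot (Tendsto.congr (fun W => (hdiff W).symm) ?_)
  exact (tendsto_id.const_mul_atTop_of_neg (by linarith)).atBot_add (hremainder.const_mul (1 / 2))

/-- if the between-cluster similarities are pairwise constant but non-uniform
(`a = λ_{ij} > λ_{il} = b`), then merging `Cl i` with `Cl j` and splitting `Cl l` into two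
nonempty parts strictly decreases the ratio-cut cost once the weight `W` put on `x ∈ Cl i`
is large enough. -/
theorem rcut_merge_split_improves
    {X : Type*} [Fintype X] [DecidableEq X]
    (s : X → X → ℝ) (hsym : ∀ x y, s x y = s y x) (hnn : ∀ x y, 0 ≤ s x y)
    (k : ℕ) (hk3 : 3 ≤ k) (hk2 : k < Fintype.card X)
    (Cl : Fin k → Finset X) (hCl : IsClusteringI Cl)
    (i j l : Fin k) (hij : i ≠ j) (hil : i ≠ l) (hjl : j ≠ l)
    (lam : Fin k → Fin k → ℝ)
    (hlam : ∀ p q : Fin k, p ≠ q → ∀ u ∈ Cl p, ∀ v ∈ Cl q, s u v = lam p q)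
    (a b : ℝ) (ha : lam i j = a) (hb : lam i l = b) (hab : b < a)
    (hl2 : 2 ≤ (Cl l).card)
    (x : X) (hx : x ∈ Cl i)
    (D₁ D₂ : Finset X) (hD₁ : D₁.Nonempty) (hD₂ : D₂.Nonempty)
    (hDdisj : Disjoint D₁ D₂) (hDun : D₁ ∪ D₂ = Cl l) :
    ∃ W₀ > (0 : ℝ), ∀ W ≥ W₀,
      rcutI (fun t => if t = i then Cl i ∪ Cl j else if t = j then D₁
                      else if t = l then D₂ else Cl t)
        (fun z => if z = x then W else 1) s
      < rcutI Cl (fun z => if z = x then W else 1) s :=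
  rcut_merge_split_improves_general s hsym k Cl hCl i j l hij hil hjl lam hlam a b ha hb hab x hx D₁
    D₂ hD₁ hD₂ hDun
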